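/- Let P₊ be any positive root system for the finite type A_{e-1} root system Φ^fin, with P₋ = −P₊. Then there exists a convex preorder ≽ on the affine positive roots Φ₊ of type A_{e-1}^{(1)} such that Φ_{≻δ} = {β ∈ Φ₊ : p(β) ∈ P₊} and Φ_{≺δ} = {β ∈ Φ₊ : p(β) ∈ P₋}, where p: ℤI → ℤI/ℤδ is reduction modulo the null root δ. -/

import Mathlib

/-- The positive root `α(t,L) = α_{t̄} + ⋯ + α_{t̄+L-1}` of affine type `A_{e-1}^{(1)}`,
as an element of the root lattice `ZMod e → ℤ`. -/
def alphaRoot (e : ℕ) (t : ℤ) (L : ℕ) : ZMod e → ℤ := fun j =>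
  (((Finset.range L).filter (fun k : ℕ => ((t + (k : ℤ) : ℤ) : ZMod e) = j)).card : ℤ)

/-- The null root `δ = α_0 + α_1 + ⋯ + α_{e-1}`. -/
def deltaRoot (e : ℕ) : ZMod e → ℤ := fun _ => 1

/-- The set `Φ₊` of positive roots of affine type `A_{e-1}^{(1)}`. -/
def PhiPos (e : ℕ) : Set (ZMod e → ℤ) :=
  {β | ∃ t : ℤ, ∃ L : ℕ, 0 < L ∧ β = alphaRoot e t L}

/-- Imaginary roots: positive multiples of the null root `δ`. -/
def ImaginaryRoot (e : ℕ) (β : ZMod e → ℤ) : Prop :=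
  ∃ m : ℕ, 0 < m ∧ β = fun _ => (m : ℤ)

/-- A convex preorder on `Φ₊`: reflexive, transitive, total, convex, and with mutual
comparability exactly for equal or both-imaginary roots. -/
structure ConvexPreorderOn (e : ℕ) where
  rel : (ZMod e → ℤ) → (ZMod e → ℤ) → Prop
  refl : ∀ β ∈ PhiPos e, rel β β
  trans : ∀ β γ ν, β ∈ PhiPos e → γ ∈ PhiPos e → ν ∈ PhiPos e →
    rel β γ → rel γ ν → rel β ν
  total : ∀ β γ, β ∈ PhiPos e → γ ∈ PhiPos e → rel β γ ∨ rel γ β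
  convex : ∀ β γ, β ∈ PhiPos e → γ ∈ PhiPos e → rel β γ → β + γ ∈ PhiPos e →
    rel β (β + γ) ∧ rel (β + γ) γ
  imag_equiv : ∀ β γ, β ∈ PhiPos e → γ ∈ PhiPos e →
    ((rel β γ ∧ rel γ β) ↔ (β = γ ∨ (ImaginaryRoot e β ∧ ImaginaryRoot e γ)))

/-- The strict relation `β ≻ γ` associated to a convex preorder. -/
def GtRel {e : ℕ} (P : ConvexPreorderOn e) (β γ : ZMod e → ℤ) : Prop :=
  P.rel β γ ∧ ¬ P.rel γ β

/-- Reduction mod `δ`: `p(β) = β − β(0)·δ`, identifying `ℤI/ℤδ` with the functions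
vanishing at `0`. -/
def pFin (e : ℕ) (β : ZMod e → ℤ) : ZMod e → ℤ :=
  β - (fun _ => β 0)

/-- The finite type `A_{e-1}` root system
`Φ^fin = {±α(t,L) : t ∈ [1,e−1], L ∈ [1, e−t]}`. -/
def PhiFin (e : ℕ) : Set (ZMod e → ℤ) :=
  {β | ∃ t L : ℕ, 1 ≤ t ∧ t ≤ e - 1 ∧ 1 ≤ L ∧ L ≤ e - t ∧
    (β = alphaRoot e (t : ℤ) L ∨ β = -alphaRoot e (t : ℤ) L)}

/-!
In ε-coordinates `β ↦ (β i - β (i - 1))ᵢ` every real root of `Φ₊` becomes `ε_i - ε_j` for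
residues `i ≠ j`, and the imaginary roots become `0`. The positive system `P₊` is a total order
on the residues (`i ≺ j` iff `ε_i - ε_j ∈ P₊`), so ranking the residues gives an integral
functional `c` that is positive exactly on `P₊`. Order `Φ₊` by the lexicographic slope
`(c β, β) / ht β`: the slope of `β + γ` is a mediant of those of `β` and `γ`, which gives
convexity; only proportional roots share a slope; and `δ` has slope `(0, δ / e)`, so comparing a
real root with `δ` amounts to the sign of `c β`.
-/

section EpsCoord
variable (e : ℕ)

/-- With `α_i = ε_i - ε_(i+1)`, the `ε_i`-coordinate of `∑ β_i α_i` is `β_i - β_(i-1)`. -/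
def epsCoord : (ZMod e → ℤ) →+ (ZMod e → ℤ) :=
  AddMonoidHom.mk' (fun β i => β i - β (i - 1)) fun β γ => by
    ext i; simp only [Pi.add_apply]; ring

lemma epsCoord_apply (β : ZMod e → ℤ) (i : ZMod e) : epsCoord e β i = β i - β (i - 1) := rfl

lemma epsCoord_const (m : ℤ) : epsCoord e (fun _ => m) = 0 := by
  ext i; simp [epsCoord_apply]

lemma epsCoord_deltaRoot : epsCoord e (deltaRoot e) = 0 := epsCoord_const e 1

lemma epsCoord_pFin (β : ZMod e → ℤ) : epsCoord e (pFin e β) = epsCoord e β := by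
  rw [pFin, map_sub, epsCoord_const, sub_zero]

lemma epsCoord_single (s : ZMod e) :
    epsCoord e (Pi.single s 1) = Pi.single s 1 - Pi.single (s + 1) 1 := by
  ext i
  simp [epsCoord_apply, Pi.single_apply, sub_eq_iff_eq_add]

variable {e} [NeZero e]

lemma eq_const_of_epsCoord_eq_zero {β : ZMod e → ℤ} (h : epsCoord e β = 0) :
    β = fun _ => β 0 := by
  have hnat : ∀ n : ℕ, β n = β 0 := by
    intro n
    induction n with
    | zero => simp
    | succ n ih =>
      have step := congrFun h (n + 1 : ℕ)
      rw [epsCoord_apply, Nat.cast_succ, add_sub_cancel_right, Pi.zero_apply, sub_eq_zero] at step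
      rw [Nat.cast_succ, step, ih]
  ext i
  rw [← ZMod.natCast_zmod_val i, hnat]

lemma eq_of_epsCoord_eq {β γ : ZMod e → ℤ} (h : epsCoord e β = epsCoord e γ)
    (h0 : β 0 = γ 0) : β = γ := by
  have hconst := eq_const_of_epsCoord_eq_zero
    (by rw [map_sub, h, sub_self] : epsCoord e (β - γ) = 0)
  rw [Pi.sub_apply, h0, sub_self] at hconst
  exact sub_eq_zero.1 hconst

end EpsCoord

section AlphaRoot
variable (e : ℕ)

lemma alphaRoot_zero (t : ℤ) : alphaRoot e t 0 = 0 := by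
  ext j; simp [alphaRoot]

lemma alphaRoot_succ (t : ℤ) (L : ℕ) :
    alphaRoot e t (L + 1) = alphaRoot e t L + Pi.single ((t + L : ℤ) : ZMod e) 1 := by
  ext j
  simp only [alphaRoot, Finset.range_add_one, Finset.filter_insert, Pi.add_apply, Pi.single_apply,
    eq_comm (a := j)]
  split_ifs
  · rw [Finset.card_insert_of_notMem (by simp)]
    push_cast; ring
  · ring

lemma epsCoord_alphaRoot (t : ℤ) (L : ℕ) :
    epsCoord e (alphaRoot e t L) =
      Pi.single (t : ZMod e) 1 - Pi.single ((t + L : ℤ) : ZMod e) 1 := by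
  induction L with
  | zero => simp [alphaRoot_zero]
  | succ L ih =>
    rw [alphaRoot_succ, map_add, ih, epsCoord_single]
    push_cast [← add_assoc]
    abel

lemma alphaRoot_apply_zero {t L : ℕ} (ht : 1 ≤ t) (hL : t + L ≤ e) :
    alphaRoot e t L 0 = 0 := by
  simp only [alphaRoot, Nat.cast_eq_zero, Finset.card_eq_zero, Finset.filter_eq_empty_iff,
    Finset.mem_range]
  intro k hk hdvd
  rw [ZMod.intCast_zmod_eq_zero_iff_dvd] at hdvd
  have := Int.le_of_dvd (by positivity) hdvd
  omega

variable [NeZero e]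

def height : (ZMod e → ℤ) →+ ℤ where
  toFun β := ∑ i, β i
  map_zero' := by simp
  map_add' β γ := by simp [Finset.sum_add_distrib]

lemma height_const (m : ℤ) : height e (fun _ => m) = e * m := by
  simp [height, ZMod.card]

lemma height_alphaRoot (t : ℤ) (L : ℕ) : height e (alphaRoot e t L) = L := by
  induction L with
  | zero => simp [alphaRoot_zero]
  | succ L ih =>
    rw [alphaRoot_succ, map_add, ih]
    simp [height]

end AlphaRoot

section Roots
variable {e : ℕ}

lemma neg_mem_PhiFin {v : ZMod e → ℤ} (hv : v ∈ PhiFin e) : -v ∈ PhiFin e := by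
  obtain ⟨t, L, h₁, h₂, h₃, h₄, rfl | rfl⟩ := hv
  · exact ⟨t, L, h₁, h₂, h₃, h₄, Or.inr rfl⟩
  · exact ⟨t, L, h₁, h₂, h₃, h₄, Or.inl (neg_neg _)⟩

lemma PhiFin_apply_zero {v : ZMod e → ℤ} (hv : v ∈ PhiFin e) : v 0 = 0 := by
  obtain ⟨t, L, ht, -, hL₁, hL₂, rfl | rfl⟩ := hv <;>
    simp [alphaRoot_apply_zero e ht (by omega : t + L ≤ e)]

lemma exists_epsCoord_eq_of_mem_PhiPos {β : ZMod e → ℤ} (hβ : β ∈ PhiPos e) :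
    ∃ i j, epsCoord e β = Pi.single i 1 - Pi.single j 1 := by
  obtain ⟨t, L, -, rfl⟩ := hβ
  exact ⟨_, _, epsCoord_alphaRoot e t L⟩

lemma exists_epsCoord_eq_of_mem_PhiFin {v : ZMod e → ℤ} (hv : v ∈ PhiFin e) :
    ∃ i j, epsCoord e v = Pi.single i 1 - Pi.single j 1 := by
  obtain ⟨t, L, -, -, -, -, rfl | rfl⟩ := hv
  · exact ⟨_, _, epsCoord_alphaRoot e t L⟩
  · exact ⟨_, _, by rw [map_neg, epsCoord_alphaRoot, neg_sub]⟩

lemma pFin_eq_zero_of_imaginaryRoot {β : ZMod e → ℤ} (hβ : ImaginaryRoot e β) :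
    pFin e β = 0 := by
  obtain ⟨m, -, rfl⟩ := hβ
  exact sub_self _

variable [NeZero e]

lemma exists_mem_PhiFin_epsCoord_eq {i j : ZMod e} (hij : i ≠ j) :
    ∃ v ∈ PhiFin e, epsCoord e v = Pi.single i 1 - Pi.single j 1 := by
  -- representatives of the residues in `[1, e]`: `ε_e` plays the role of `ε_0`
  have hrep : ∀ k : ZMod e, ∃ a : ℕ, 1 ≤ a ∧ a ≤ e ∧ (a : ZMod e) = k := by
    intro k
    by_cases hk : k = 0
    · exact ⟨e, NeZero.one_le, le_rfl, by rw [hk, ZMod.natCast_self]⟩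
    · exact ⟨k.val, Nat.one_le_iff_ne_zero.2 ((ZMod.val_ne_zero k).2 hk), (ZMod.val_lt k).le,
        ZMod.natCast_zmod_val k⟩
  obtain ⟨a, ha₁, ha₂, rfl⟩ := hrep i
  obtain ⟨b, hb₁, hb₂, rfl⟩ := hrep j
  have hab : a ≠ b := by rintro rfl; exact hij rfl
  wlog hlt : a < b generalizing a b
  · obtain ⟨v, hv, hεv⟩ := this b hb₁ hb₂ a ha₁ ha₂ (Ne.symm hij) hab.symm (by omega)
    exact ⟨-v, neg_mem_PhiFin hv, by rw [map_neg, hεv, neg_sub]⟩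
  refine ⟨alphaRoot e a (b - a), ⟨a, b - a, ha₁, by omega, by omega, by omega, Or.inl rfl⟩, ?_⟩
  rw [epsCoord_alphaRoot]
  push_cast [Nat.cast_sub hlt.le]
  ring_nf

lemma eq_of_mem_PhiFin_of_epsCoord_eq {v w : ZMod e → ℤ} (hv : v ∈ PhiFin e) (hw : w ∈ PhiFin e)
    (h : epsCoord e v = epsCoord e w) : v = w :=
  eq_of_epsCoord_eq h (by rw [PhiFin_apply_zero hv, PhiFin_apply_zero hw])

lemma height_deltaRoot : height e (deltaRoot e) = e := (height_const e 1).trans (mul_one _)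

lemma height_pos_of_mem_PhiPos {β : ZMod e → ℤ} (hβ : β ∈ PhiPos e) : 0 < height e β := by
  obtain ⟨t, L, hL, rfl⟩ := hβ
  rw [height_alphaRoot]
  exact_mod_cast hL

lemma imaginaryRoot_iff_epsCoord_eq_zero {β : ZMod e → ℤ} (hβ : 0 < height e β) :
    ImaginaryRoot e β ↔ epsCoord e β = 0 := by
  constructor
  · rintro ⟨m, -, rfl⟩
    exact epsCoord_const e m
  · intro h
    have hconst := eq_const_of_epsCoord_eq_zero h
    rw [hconst, height_const] at hβ
    have hpos : 0 < β 0 := pos_of_mul_pos_right hβ (by positivity)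
    exact ⟨(β 0).toNat, by omega, by rw [hconst, Int.toNat_of_nonneg hpos.le]⟩

lemma pFin_mem_PhiFin {β : ZMod e → ℤ} (hβ : β ∈ PhiPos e) (hre : ¬ ImaginaryRoot e β) :
    pFin e β ∈ PhiFin e := by
  obtain ⟨i, j, hεβ⟩ := exists_epsCoord_eq_of_mem_PhiPos hβ
  have hij : i ≠ j := by
    rintro rfl
    rw [sub_self, ← imaginaryRoot_iff_epsCoord_eq_zero (height_pos_of_mem_PhiPos hβ)] at hεβ
    exact hre hεβ
  obtain ⟨v, hv, hεv⟩ := exists_mem_PhiFin_epsCoord_eq hij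
  convert hv
  exact eq_of_epsCoord_eq (by rw [epsCoord_pFin, hεβ, hεv])
    (by rw [PhiFin_apply_zero hv, pFin, Pi.sub_apply, sub_self])

lemma height_smul_eq_height_smul_iff {β γ : ZMod e → ℤ} (hβ : β ∈ PhiPos e)
    (hγ : γ ∈ PhiPos e) :
    height e β • γ = height e γ • β ↔ β = γ ∨ (ImaginaryRoot e β ∧ ImaginaryRoot e γ) := by
  have hβ₀ := height_pos_of_mem_PhiPos hβ
  have hγ₀ := height_pos_of_mem_PhiPos hγ
  constructor
  · intro h
    have hε : height e β • epsCoord e γ = height e γ • epsCoord e β := by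
      rw [← map_zsmul, h, map_zsmul]
    rw [imaginaryRoot_iff_epsCoord_eq_zero hβ₀, imaginaryRoot_iff_epsCoord_eq_zero hγ₀]
    by_cases hεβ : epsCoord e β = 0
    · rw [hεβ, smul_zero, smul_eq_zero] at hε
      exact Or.inr ⟨hεβ, hε.resolve_left hβ₀.ne'⟩
    left
    obtain ⟨i, j, hij⟩ := exists_epsCoord_eq_of_mem_PhiPos hβ
    obtain ⟨i', j', hij'⟩ := exists_epsCoord_eq_of_mem_PhiPos hγ
    have hne : i ≠ j := by rintro rfl; exact hεβ (by rw [hij, sub_self])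
    -- at `i`: `ht β * (ε γ) i = ht γ` with `(ε γ) i ≤ 1`, which forces equal heights
    have hi := congrFun hε i
    simp only [Pi.smul_apply, hij, hij', Pi.sub_apply, Pi.single_apply, smul_eq_mul] at hi
    have hheight : height e β = height e γ := by
      split_ifs at hi <;> nlinarith
    rw [hheight] at h
    exact (zsmul_right_injective hγ₀.ne' h).symm
  · rintro (rfl | ⟨⟨m, -, rfl⟩, ⟨n, -, rfl⟩⟩)
    · rfl
    · ext i
      simp only [height_const, Pi.smul_apply, smul_eq_mul]
      ring

end Roots

section Slope
variable {V W : Type*} [AddCommGroup V] [AddCommGroup W] [LinearOrder W]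
  (ht : V →+ ℤ) (k : V →+ W)

/-- `k γ / ht γ ≤ k β / ht β`, with the denominators cleared. -/
def SlopeGE (β γ : V) : Prop := ht β • k γ ≤ ht γ • k β

variable {ht k}

lemma slopeGE_refl (β : V) : SlopeGE ht k β β := le_rfl

lemma slopeGE_total (β γ : V) : SlopeGE ht k β γ ∨ SlopeGE ht k γ β := le_total _ _

lemma slopeGE_trans [IsOrderedAddMonoid W] {β γ ν : V} (hβ : 0 ≤ ht β) (hγ : 0 < ht γ)
    (hν : 0 ≤ ht ν) (h₁ : SlopeGE ht k β γ) (h₂ : SlopeGE ht k γ ν) : SlopeGE ht k β ν := by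
  unfold SlopeGE at *
  rw [← zsmul_le_zsmul_iff_right hγ]
  calc ht γ • ht β • k ν = ht β • ht γ • k ν := smul_comm _ _ _
    _ ≤ ht β • ht ν • k γ := zsmul_le_zsmul_right hβ h₂
    _ = ht ν • ht β • k γ := smul_comm _ _ _
    _ ≤ ht ν • ht γ • k β := zsmul_le_zsmul_right hν h₁
    _ = ht γ • ht ν • k β := smul_comm _ _ _

lemma slopeGE_add_right [IsOrderedAddMonoid W] {β γ : V} (h : SlopeGE ht k β γ) :
    SlopeGE ht k β (β + γ) := by
  unfold SlopeGE at *
  simpa only [map_add, smul_add, add_smul, add_le_add_iff_left] using h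

lemma slopeGE_add_left [IsOrderedAddMonoid W] {β γ : V} (h : SlopeGE ht k β γ) :
    SlopeGE ht k (β + γ) γ := by
  unfold SlopeGE at *
  simpa only [map_add, smul_add, add_smul, add_le_add_iff_right] using h

end Slope

section SlopePreorder
variable (e : ℕ) [NeZero e] {W : Type*} [AddCommGroup W] [LinearOrder W] [IsOrderedAddMonoid W]

def slopePreorder (k : (ZMod e → ℤ) →+ W) (hk : Function.Injective k) : ConvexPreorderOn e where
  rel := SlopeGE (height e) k
  refl β _ := slopeGE_refl β
  trans _ _ _ hβ hγ hν := slopeGE_trans (height_pos_of_mem_PhiPos hβ).le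
    (height_pos_of_mem_PhiPos hγ) (height_pos_of_mem_PhiPos hν).le
  total β γ _ _ := slopeGE_total β γ
  convex _ _ _ _ h _ := ⟨slopeGE_add_right h, slopeGE_add_left h⟩
  imag_equiv β γ hβ hγ := by
    rw [← height_smul_eq_height_smul_iff hβ hγ, ← hk.eq_iff, map_zsmul, map_zsmul, SlopeGE,
      SlopeGE, and_comm, ← le_antisymm_iff, eq_comm]

variable {e}

lemma gtRel_slopePreorder_iff {k : (ZMod e → ℤ) →+ W} (hk : Function.Injective k)
    {β γ : ZMod e → ℤ} :
    GtRel (slopePreorder e k hk) β γ ↔ height e β • k γ < height e γ • k β :=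
  (lt_iff_le_not_ge).symm

end SlopePreorder

lemma Prod.Lex.lt_iff_of_fst_ne {α β : Type*} [LT α] [LT β] {x y : α ×ₗ β}
    (h : (ofLex x).1 ≠ (ofLex y).1) : x < y ↔ (ofLex x).1 < (ofLex y).1 := by
  rw [Prod.Lex.lt_iff, or_iff_left (fun h' => h h'.1)]

section SlopeKey
variable {e : ℕ} [NeZero e]

def slopeKey (c : ZMod e → ℤ) : (ZMod e → ℤ) →+ Lex (ℤ × Lex (ℕ → ℤ)) :=
  AddMonoidHom.mk' (fun β => toLex (c ⬝ᵥ epsCoord e β, toLex fun n : ℕ => β n))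
    fun β γ => by simp only [map_add, dotProduct_add, Pi.add_apply]; rfl

lemma slopeKey_injective (c : ZMod e → ℤ) : Function.Injective (slopeKey c) := by
  intro β γ h
  ext i
  have := congrFun (congrArg (fun x => ofLex (ofLex x).2) h) i.val
  simpa [slopeKey] using this

lemma fst_ofLex_smul_slopeKey (c : ZMod e → ℤ) (n : ℤ) (β : ZMod e → ℤ) :
    (ofLex (n • slopeKey c β)).1 = n * (c ⬝ᵥ epsCoord e β) := rfl

lemma gtRel_slopePreorder_deltaRoot_iff {c β : ZMod e → ℤ}
    (hre : ¬ ImaginaryRoot e β → c ⬝ᵥ epsCoord e β ≠ 0) :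
    (GtRel (slopePreorder e (slopeKey c) (slopeKey_injective c)) β (deltaRoot e) ↔
      0 < c ⬝ᵥ epsCoord e β) ∧
    (GtRel (slopePreorder e (slopeKey c) (slopeKey_injective c)) (deltaRoot e) β ↔
      c ⬝ᵥ epsCoord e β < 0) := by
  rw [gtRel_slopePreorder_iff, gtRel_slopePreorder_iff]
  by_cases him : ImaginaryRoot e β
  · obtain ⟨m, -, rfl⟩ := him
    have hβδ : height e (fun _ => (m : ℤ)) • slopeKey c (deltaRoot e) =
        height e (deltaRoot e) • slopeKey c (fun _ => (m : ℤ)) := by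
      have hm : (fun _ => (m : ℤ)) = (m : ℤ) • deltaRoot e := by ext; simp [deltaRoot]
      rw [hm, map_zsmul, map_zsmul, smul_smul, smul_eq_mul, mul_comm]
    rw [hβδ, epsCoord_const, dotProduct_zero]
    exact ⟨iff_of_false (lt_irrefl _) (lt_irrefl 0), iff_of_false (lt_irrefl _) (lt_irrefl 0)⟩
  have he : (0 : ℤ) < e := by exact_mod_cast NeZero.pos e
  have hfst : (ofLex (height e β • slopeKey c (deltaRoot e))).1 ≠
      (ofLex (height e (deltaRoot e) • slopeKey c β)).1 := by
    rw [fst_ofLex_smul_slopeKey, fst_ofLex_smul_slopeKey, epsCoord_deltaRoot, dotProduct_zero,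
      mul_zero, height_deltaRoot]
    exact (mul_ne_zero he.ne' (hre him)).symm
  rw [Prod.Lex.lt_iff_of_fst_ne hfst, Prod.Lex.lt_iff_of_fst_ne hfst.symm, fst_ofLex_smul_slopeKey,
    fst_ofLex_smul_slopeKey, epsCoord_deltaRoot, dotProduct_zero, mul_zero, height_deltaRoot]
  exact ⟨mul_pos_iff_of_pos_left he, smul_neg_iff_of_pos_left he⟩

end SlopeKey

section PositiveSystem
variable {e : ℕ} {Pp : Set (ZMod e → ℤ)}

/-- `i ≺ j` when `ε_i - ε_j` is a positive root. -/
def Precedes (Pp : Set (ZMod e → ℤ)) (i j : ZMod e) : Prop :=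
  ∃ v ∈ Pp, epsCoord e v = Pi.single i 1 - Pi.single j 1

variable (hpart : PhiFin e = Pp ∪ {β | -β ∈ Pp}) (hdisj : ∀ β ∈ Pp, -β ∉ Pp)
  (hclosed : ∀ β₁ ∈ Pp, ∀ β₂ ∈ Pp, β₁ + β₂ ∈ PhiFin e → β₁ + β₂ ∈ Pp)

include hpart in
lemma mem_PhiFin_of_mem {v : ZMod e → ℤ} (hv : v ∈ Pp) : v ∈ PhiFin e :=
  hpart ▸ Or.inl hv

variable [NeZero e]

include hpart hdisj in
lemma precedes_irrefl (i : ZMod e) : ¬ Precedes Pp i i := by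
  rintro ⟨v, hv, hεv⟩
  have hv₀ : v = 0 := eq_of_epsCoord_eq (by rw [hεv, sub_self, map_zero])
    (PhiFin_apply_zero (mem_PhiFin_of_mem hpart hv))
  subst hv₀
  exact hdisj 0 hv (by rwa [neg_zero])

include hpart hdisj in
lemma precedes_asymm {i j : ZMod e} (hij : Precedes Pp i j) : ¬ Precedes Pp j i := by
  rintro ⟨w, hw, hεw⟩
  obtain ⟨v, hv, hεv⟩ := hij
  have hvw : -v = w := eq_of_mem_PhiFin_of_epsCoord_eq
    (neg_mem_PhiFin (mem_PhiFin_of_mem hpart hv)) (mem_PhiFin_of_mem hpart hw)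
    (by rw [map_neg, hεv, hεw, neg_sub])
  exact hdisj v hv (hvw ▸ hw)

include hpart hdisj hclosed in
lemma precedes_trans {i j k : ZMod e} (hij : Precedes Pp i j) (hjk : Precedes Pp j k) :
    Precedes Pp i k := by
  have hik : i ≠ k := by rintro rfl; exact precedes_asymm hpart hdisj hij hjk
  obtain ⟨v, hv, hεv⟩ := hij
  obtain ⟨w, hw, hεw⟩ := hjk
  obtain ⟨u, hu, hεu⟩ := exists_mem_PhiFin_epsCoord_eq hik
  have hεvw : epsCoord e (v + w) = Pi.single i 1 - Pi.single k 1 := by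
    rw [map_add, hεv, hεw, sub_add_sub_cancel]
  have hvw : v + w = u := eq_of_epsCoord_eq (by rw [hεvw, hεu])
    (by rw [Pi.add_apply, PhiFin_apply_zero (mem_PhiFin_of_mem hpart hv),
      PhiFin_apply_zero (mem_PhiFin_of_mem hpart hw), PhiFin_apply_zero hu, add_zero])
  exact ⟨v + w, hclosed v hv w hw (hvw ▸ hu), hεvw⟩

open Classical in
noncomputable def precRank (Pp : Set (ZMod e → ℤ)) (i : ZMod e) : ℕ :=
  (Finset.univ.filter (Precedes Pp i)).card

include hpart hdisj hclosed in
lemma precRank_lt_of_precedes {i j : ZMod e} (hij : Precedes Pp i j) :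
    precRank Pp j < precRank Pp i := by
  classical
  refine Finset.card_lt_card ⟨fun k hk => ?_, fun hsub => ?_⟩
  · simp only [Finset.mem_filter, Finset.mem_univ, true_and] at hk ⊢
    convert precedes_trans hpart hdisj hclosed hij hk
  · have := hsub (by simpa using hij)
    simp only [Finset.mem_filter, Finset.mem_univ, true_and] at this
    convert precedes_irrefl hpart hdisj j this

include hpart hdisj hclosed in
lemma exists_dotProduct_epsCoord_pos :
    ∃ c : ZMod e → ℤ, ∀ v ∈ Pp, 0 < c ⬝ᵥ epsCoord e v := by
  refine ⟨fun i => precRank Pp i, fun v hv => ?_⟩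
  obtain ⟨i, j, hεv⟩ := exists_epsCoord_eq_of_mem_PhiFin (mem_PhiFin_of_mem hpart hv)
  have hlt := precRank_lt_of_precedes hpart hdisj hclosed ⟨v, hv, hεv⟩
  rw [hεv, dotProduct_sub, dotProduct_single, dotProduct_single, mul_one, mul_one, sub_pos]
  exact_mod_cast hlt

include hpart hdisj in
lemma dotProduct_epsCoord_pos_iff_and_neg_iff {c : ZMod e → ℤ}
    (hc : ∀ v ∈ Pp, 0 < c ⬝ᵥ epsCoord e v)
    {β : ZMod e → ℤ} (hβ : β ∈ PhiPos e) :
    (0 < c ⬝ᵥ epsCoord e β ↔ pFin e β ∈ Pp) ∧ (c ⬝ᵥ epsCoord e β < 0 ↔ -pFin e β ∈ Pp) := by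
  by_cases him : ImaginaryRoot e β
  · have hzero : (0 : ZMod e → ℤ) ∉ Pp := fun h => hdisj 0 h (by rwa [neg_zero])
    rw [(imaginaryRoot_iff_epsCoord_eq_zero (height_pos_of_mem_PhiPos hβ)).1 him,
      pFin_eq_zero_of_imaginaryRoot him, neg_zero, dotProduct_zero]
    exact ⟨iff_of_false (lt_irrefl 0) hzero, iff_of_false (lt_irrefl 0) hzero⟩
  rw [← epsCoord_pFin]
  rcases hpart ▸ pFin_mem_PhiFin hβ him with hp | hp
  · have := hc _ hp
    exact ⟨iff_of_true this hp, iff_of_false this.not_gt (hdisj _ hp)⟩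
  · have := hc _ hp
    rw [map_neg, dotProduct_neg, neg_pos] at this
    exact ⟨iff_of_false this.not_gt fun h => hdisj _ hp (by rwa [neg_neg]), iff_of_true this hp⟩

include hpart hdisj in
lemma dotProduct_epsCoord_ne_zero {c : ZMod e → ℤ} (hc : ∀ v ∈ Pp, 0 < c ⬝ᵥ epsCoord e v)
    {β : ZMod e → ℤ} (hβ : β ∈ PhiPos e) (hre : ¬ ImaginaryRoot e β) :
    c ⬝ᵥ epsCoord e β ≠ 0 := by
  have hsign := dotProduct_epsCoord_pos_iff_and_neg_iff hpart hdisj hc hβ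
  rcases hpart ▸ pFin_mem_PhiFin hβ hre with hp | hp
  · exact (hsign.1.2 hp).ne'
  · exact (hsign.2.2 hp).ne

end PositiveSystem

/-- For any positive root system `P₊` of `Φ^fin` there is a convex preorder `≽` on
`Φ₊` with `Φ_{≻δ} = {β ∈ Φ₊ : p(β) ∈ P₊}` and `Φ_{≺δ} = {β ∈ Φ₊ : p(β) ∈ P₋}`. -/
theorem statement13 (e : ℕ) (he : 1 < e) (Pp : Set (ZMod e → ℤ))
    (hpart : PhiFin e = Pp ∪ {β | -β ∈ Pp})
    (hdisj : ∀ β ∈ Pp, -β ∉ Pp)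
    (hclosed : ∀ β₁ ∈ Pp, ∀ β₂ ∈ Pp, β₁ + β₂ ∈ PhiFin e → β₁ + β₂ ∈ Pp) :
    ∃ P : ConvexPreorderOn e,
      ({β | β ∈ PhiPos e ∧ GtRel P β (deltaRoot e)} =
        {β | β ∈ PhiPos e ∧ pFin e β ∈ Pp}) ∧
      ({β | β ∈ PhiPos e ∧ GtRel P (deltaRoot e) β} =
        {β | β ∈ PhiPos e ∧ -pFin e β ∈ Pp}) := by
  have : NeZero e := ⟨by omega⟩
  obtain ⟨c, hc⟩ := exists_dotProduct_epsCoord_pos hpart hdisj hclosed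
  have hsign {β} (hβ : β ∈ PhiPos e) :=
    dotProduct_epsCoord_pos_iff_and_neg_iff hpart hdisj hc hβ
  have hδ {β} (hβ : β ∈ PhiPos e) :=
    gtRel_slopePreorder_deltaRoot_iff (dotProduct_epsCoord_ne_zero hpart hdisj hc hβ)
  refine ⟨slopePreorder e (slopeKey c) (slopeKey_injective c), ?_, ?_⟩ <;> ext β <;>
    refine and_congr_right fun hβ => ?_
  · exact (hδ hβ).1.trans (hsign hβ).1
  · exact (hδ hβ).2.trans (hsign hβ).2
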